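/- arXiv:2501.00480 — 2 statements merged into one kernel-verified Lean document; each statement's English description precedes it below -/
import Mathlib

section
/- Let L be the Laplacian of a directed graph on N follower nodes with nonnegative adjacency weights, and G₁, G₂ nonnegative diagonal pinning matrices such that every follower has a directed path from at least one pinned node (leader). Then Φ₁ + Φ₂, where Φ_k = ½L + G_k, is nonsingular. -/
/-!
`Φ₁ + Φ₂ = diag(∑ⱼ Aᵢⱼ + gᵢ) - A` with `g = g₁ + g₂`. A kernel vector `v` of it satisfies, row by
row and by the triangle inequality, `gᵢ |vᵢ| + ∑ⱼ Aᵢⱼ (|vᵢ| - |vⱼ|) ≤ 0`. At an index where `|v|`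
is maximal every summand is nonnegative, hence zero: the maximum of `|v|` spreads along every edge
and kills the pinning gain. Following a path from a maximal index to a pinned node forces the
maximum, hence `v`, to vanish.
-/

open Matrix

section PinnedLaplacian

variable {ι : Type*} [Fintype ι] [DecidableEq ι] {A : Matrix ι ι ℝ} {g v : ι → ℝ}

theorem pinning_mul_abs_add_sum_le_zero (hA : ∀ i j, 0 ≤ A i j) (hg : ∀ i, 0 ≤ g i)
    (hv : (diagonal (fun i => ∑ j, A i j + g i) - A) *ᵥ v = 0) (i : ι) :
    g i * |v i| + ∑ j, A i j * (|v i| - |v j|) ≤ 0 := by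
  have hrow : (∑ j, A i j + g i) * v i = ∑ j, A i j * v j := by
    have h := congrFun hv i
    simp only [sub_mulVec, mulVec_diagonal, Pi.sub_apply, Pi.zero_apply, sub_eq_zero] at h
    exact h
  have hdiag : 0 ≤ ∑ j, A i j + g i :=
    add_nonneg (Finset.sum_nonneg fun j _ => hA i j) (hg i)
  have htri : (∑ j, A i j + g i) * |v i| ≤ ∑ j, A i j * |v j| :=
    calc (∑ j, A i j + g i) * |v i| = |∑ j, A i j * v j| := by
          rw [← hrow, abs_mul, abs_of_nonneg hdiag]
      _ ≤ ∑ j, |A i j * v j| := Finset.abs_sum_le_sum_abs _ _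
      _ = ∑ j, A i j * |v j| := by simp only [abs_mul, abs_of_nonneg (hA i _)]
  simp only [mul_sub, Finset.sum_sub_distrib, ← Finset.sum_mul]
  linarith

section IsMax

variable (hA : ∀ i j, 0 ≤ A i j) (hg : ∀ i, 0 ≤ g i)
  (hv : (diagonal (fun i => ∑ j, A i j + g i) - A) *ᵥ v = 0)
  {i : ι} (hi : ∀ j, |v j| ≤ |v i|)
include hA hg hv hi

theorem pinning_mul_abs_eq_zero_of_isMax :
    g i * |v i| = 0 ∧ ∑ j, A i j * (|v i| - |v j|) = 0 := by
  have hg_term : 0 ≤ g i * |v i| := mul_nonneg (hg i) (abs_nonneg _)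
  have hA_term : 0 ≤ ∑ j, A i j * (|v i| - |v j|) :=
    Finset.sum_nonneg fun j _ => mul_nonneg (hA i j) (sub_nonneg.2 (hi j))
  exact (add_eq_zero_iff_of_nonneg hg_term hA_term).1
    (le_antisymm (pinning_mul_abs_add_sum_le_zero hA hg hv i) (add_nonneg hg_term hA_term))

theorem abs_eq_of_pos_of_isMax {j : ι} (hij : 0 < A i j) : |v j| = |v i| := by
  have hterm := (Finset.sum_eq_zero_iff_of_nonneg fun k _ =>
    mul_nonneg (hA i k) (sub_nonneg.2 (hi k))).1
    (pinning_mul_abs_eq_zero_of_isMax hA hg hv hi).2 j (Finset.mem_univ j)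
  linarith [(mul_eq_zero.1 hterm).resolve_left hij.ne']

theorem abs_eq_of_reflTransGen_of_isMax {j : ι}
    (hij : Relation.ReflTransGen (fun x y => 0 < A x y) i j) : |v j| = |v i| := by
  induction hij with
  | refl => rfl
  | tail _ hbc ih =>
    exact (abs_eq_of_pos_of_isMax hA hg hv (fun k => ih ▸ hi k) hbc).trans ih

end IsMax

theorem isUnit_diagonal_rowSum_add_sub (hA : ∀ i j, 0 ≤ A i j)
    (hg : ∀ i, 0 ≤ g i)
    (hreach : ∀ i, ∃ j, Relation.ReflTransGen (fun x y => 0 < A x y) i j ∧ 0 < g j) :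
    IsUnit (diagonal (fun i => ∑ j, A i j + g i) - A) := by
  rw [isUnit_iff_isUnit_det, isUnit_iff_ne_zero]
  intro hdet
  obtain ⟨v, hv0, hv⟩ := exists_mulVec_eq_zero_iff.2 hdet
  obtain ⟨k, hk⟩ := Function.ne_iff.1 hv0
  obtain ⟨i, -, hmax⟩ :=
    Finset.exists_max_image Finset.univ (fun i => |v i|) ⟨k, Finset.mem_univ k⟩
  have hi : ∀ j, |v j| ≤ |v i| := fun j => hmax j (Finset.mem_univ j)
  obtain ⟨j, hij, hgj⟩ := hreach i
  have hvj := abs_eq_of_reflTransGen_of_isMax hA hg hv hi hij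
  have hmax_pos : 0 < |v j| := hvj ▸ (abs_pos.2 hk).trans_le (hi k)
  exact (mul_pos hgj hmax_pos).ne'
    (pinning_mul_abs_eq_zero_of_isMax hA hg hv (fun l => hvj ▸ hi l)).1

end PinnedLaplacian

theorem pinned_laplacian_nonsingular_general
    (N : ℕ)
    (A : Matrix (Fin N) (Fin N) ℝ) (hA : ∀ i j, 0 ≤ A i j)
    (g₁ g₂ : Fin N → ℝ) (hg₁ : ∀ i, 0 ≤ g₁ i) (hg₂ : ∀ i, 0 ≤ g₂ i)
    (L : Matrix (Fin N) (Fin N) ℝ)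
    (hL : L = Matrix.diagonal (fun i => ∑ j, A i j) - A)
    -- every follower i is reachable (along edges i ← j with `A i j > 0`)
    -- from some node j pinned to a leader
    (hreach : ∀ i : Fin N, ∃ j : Fin N,
      Relation.ReflTransGen (fun x y => 0 < A x y) i j ∧ 0 < g₁ j + g₂ j)
    (Φ₁ Φ₂ : Matrix (Fin N) (Fin N) ℝ)
    (hΦ₁ : Φ₁ = (1 / 2 : ℝ) • L + Matrix.diagonal g₁)
    (hΦ₂ : Φ₂ = (1 / 2 : ℝ) • L + Matrix.diagonal g₂) :
    IsUnit (Φ₁ + Φ₂) := by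
  have hsum : Φ₁ + Φ₂ = diagonal (fun i => ∑ j, A i j + (g₁ i + g₂ i)) - A := by
    subst hL hΦ₁ hΦ₂
    simp only [← diagonal_add]
    module
  rw [hsum]
  exact isUnit_diagonal_rowSum_add_sub hA (fun i => add_nonneg (hg₁ i) (hg₂ i)) hreach

/-- Nonsingularity of `Φ₁ + Φ₂ = ½L + G₁ + ½L + G₂` for a directed-graph
Laplacian `L = D − A` with nonnegative weights and nonnegative pinning gains,
assuming every follower is reachable from some pinned node. -/
theorem pinned_laplacian_nonsingular
    (N : ℕ) (hN : 0 < N)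
    (A : Matrix (Fin N) (Fin N) ℝ) (hA : ∀ i j, 0 ≤ A i j)
    (g₁ g₂ : Fin N → ℝ) (hg₁ : ∀ i, 0 ≤ g₁ i) (hg₂ : ∀ i, 0 ≤ g₂ i)
    (L : Matrix (Fin N) (Fin N) ℝ)
    (hL : L = Matrix.diagonal (fun i => ∑ j, A i j) - A)
    -- every follower i is reachable (along edges i ← j with `A i j > 0`)
    -- from some node j pinned to a leader
    (hreach : ∀ i : Fin N, ∃ j : Fin N,
      Relation.ReflTransGen (fun x y => 0 < A x y) i j ∧ 0 < g₁ j + g₂ j)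
    (Φ₁ Φ₂ : Matrix (Fin N) (Fin N) ℝ)
    (hΦ₁ : Φ₁ = (1 / 2 : ℝ) • L + Matrix.diagonal g₁)
    (hΦ₂ : Φ₂ = (1 / 2 : ℝ) • L + Matrix.diagonal g₂) :
    IsUnit (Φ₁ + Φ₂) :=
  pinned_laplacian_nonsingular_general N A hA g₁ g₂ hg₁ hg₂ L hL hreach Φ₁ Φ₂ hΦ₁ hΦ₂
end

section
/- Let Φ₁, Φ₂ be symmetric positive semidefinite N×N matrices with Φ₁ + Φ₂ positive definite, and let ω_{n,1}, ω_{n,2} ∈ ℝ be leader references. Then the equilibrium of the error system e = ω − (Φ₁+Φ₂)⁻¹(Φ₁·𝟙·ω_{n,1} + Φ₂·𝟙·ω_{n,2}) under the dynamics ω̇ = −C(Φ₁+Φ₂)e with C diagonal positive definite satisfies: e(t) → 0 exponentially as t → ∞. -/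
/-!
With `C = diagonal c`, the weight `C⁻¹` in the Lyapunov function `V(e) = ∑ eᵢ² / cᵢ` cancels the
factor `C` in `ė = -C A e`, so that `V̇ = -2 eᵀ A e`. Coercivity of the positive definite `A`
(`eᵀ A e ≥ μ |e|²`) and `cᵢ ≥ δ > 0` give `V̇ ≤ -2 μ δ V`, hence `V(e t) ≤ V(e 0) e^{-2μδt}` by
Grönwall, and `eᵢ² ≤ cᵢ V(e)` turns this into exponential decay of every coordinate.
-/

open Real Matrix

theorem le_mul_exp_of_hasDerivAt_le_mul_self {f f' : ℝ → ℝ} {k a t : ℝ}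
    (hf : ∀ s, HasDerivAt f (f' s) s) (bound : ∀ s, f' s ≤ k * f s) (hat : a ≤ t) :
    f t ≤ f a * exp (k * (t - a)) := by
  have := le_gronwallBound_of_liminf_deriv_right_le (δ := f a) (ε := 0)
    (fun s _ => (hf s).continuousAt.continuousWithinAt)
    (fun s _ r hr => (hf s).hasDerivWithinAt.liminf_right_slope_le hr) le_rfl
    (fun s _ => by simpa using bound s) t ⟨hat, le_rfl⟩
  rwa [gronwallBound_ε0] at this

theorem Finite.exists_pos_forall_le_of_pos {ι : Type*} [Finite ι] {c : ι → ℝ}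
    (hc : ∀ i, 0 < c i) : ∃ δ > 0, ∀ i, δ ≤ c i := by
  rcases isEmpty_or_nonempty ι with hι | hι
  · exact ⟨1, one_pos, isEmptyElim⟩
  · obtain ⟨i₀, hi₀⟩ := Finite.exists_min c
    exact ⟨c i₀, hc i₀, hi₀⟩

open scoped MatrixOrder in
theorem Matrix.PosDef.exists_pos_mul_dotProduct_self_le {ι : Type*} [Fintype ι] [DecidableEq ι]
    {A : Matrix ι ι ℝ} (hA : A.PosDef) :
    ∃ μ > 0, ∀ x : ι → ℝ, μ * (x ⬝ᵥ x) ≤ x ⬝ᵥ A *ᵥ x := by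
  rcases isEmpty_or_nonempty ι with hι | hι
  · exact ⟨1, one_pos, fun x => by simp [dotProduct]⟩
  have hA' : IsStrictlyPositive A := isStrictlyPositive_iff_posDef.mpr hA
  obtain ⟨μ, hμ, hμA⟩ := (CFC.exists_pos_algebraMap_le_iff hA'.isSelfAdjoint).2
    fun _ hx => hA'.spectrum_pos hx
  refine ⟨μ, hμ, fun x => ?_⟩
  have := (Matrix.le_iff.mp hμA).dotProduct_mulVec_nonneg x
  rw [Algebra.algebraMap_eq_smul_one, sub_mulVec, smul_mulVec, one_mulVec, dotProduct_sub,
    dotProduct_smul, star_trivial, smul_eq_mul] at this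
  linarith

section WeightedSqNorm

variable {ι : Type*} [Fintype ι] {c : ι → ℝ}

noncomputable def weightedSqNorm (c x : ι → ℝ) : ℝ := ∑ i, x i ^ 2 / c i

theorem weightedSqNorm_nonneg (hc : ∀ i, 0 ≤ c i) (x : ι → ℝ) : 0 ≤ weightedSqNorm c x :=
  Finset.sum_nonneg fun i _ => div_nonneg (sq_nonneg _) (hc i)

theorem sq_le_mul_weightedSqNorm (hc : ∀ i, 0 < c i) (x : ι → ℝ) (i : ι) :
    x i ^ 2 ≤ c i * weightedSqNorm c x := by
  have hterm : x i ^ 2 / c i ≤ weightedSqNorm c x :=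
    Finset.single_le_sum (f := fun j => x j ^ 2 / c j)
      (fun j _ => div_nonneg (sq_nonneg _) (hc j).le) (Finset.mem_univ i)
  rwa [div_le_iff₀' (hc i)] at hterm

theorem mul_weightedSqNorm_le_dotProduct_self {δ : ℝ} (hc : ∀ i, 0 < c i)
    (hδc : ∀ i, δ ≤ c i) (x : ι → ℝ) : δ * weightedSqNorm c x ≤ x ⬝ᵥ x := by
  rw [weightedSqNorm, Finset.mul_sum, dotProduct]
  refine Finset.sum_le_sum fun i _ => ?_
  rw [mul_div_assoc', div_le_iff₀ (hc i), ← sq, mul_comm]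
  exact mul_le_mul_of_nonneg_left (hδc i) (sq_nonneg _)

theorem hasDerivAt_weightedSqNorm {e : ℝ → ι → ℝ} {e' : ι → ℝ} {t : ℝ}
    (he : ∀ i, HasDerivAt (fun s => e s i) (e' i) t) :
    HasDerivAt (fun s => weightedSqNorm c (e s)) (2 * ∑ i, e t i * e' i / c i) t := by
  refine (HasDerivAt.fun_sum fun i (_ : i ∈ Finset.univ) =>
    ((he i).fun_pow 2).div_const (c i)).congr_deriv ?_
  rw [Finset.mul_sum]
  refine Finset.sum_congr rfl fun i _ => ?_
  push_cast
  ring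

end WeightedSqNorm

section Containment

variable {ι : Type*} [Fintype ι] [DecidableEq ι] {A : Matrix ι ι ℝ} {c : ι → ℝ}
  {e : ℝ → ι → ℝ}

theorem hasDerivAt_weightedSqNorm_of_hasDerivAt_neg_diagonal_mul_mulVec (hc : ∀ i, 0 < c i)
    (he : ∀ t i, HasDerivAt (fun s => e s i) (((-(diagonal c * A)) *ᵥ e t) i) t) (t : ℝ) :
    HasDerivAt (fun s => weightedSqNorm c (e s)) (-2 * (e t ⬝ᵥ A *ᵥ e t)) t := by
  refine (hasDerivAt_weightedSqNorm (he t)).congr_deriv ?_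
  simp only [neg_mulVec, ← mulVec_mulVec, mulVec_diagonal, Pi.neg_apply, dotProduct,
    Finset.mul_sum]
  refine Finset.sum_congr rfl fun i _ => ?_
  field_simp [(hc i).ne']

theorem exists_weightedSqNorm_le_mul_exp (hA : A.PosDef) (hc : ∀ i, 0 < c i)
    (he : ∀ t i, HasDerivAt (fun s => e s i) (((-(diagonal c * A)) *ᵥ e t) i) t) :
    ∃ lam > 0, ∀ t, 0 ≤ t →
      weightedSqNorm c (e t) ≤ weightedSqNorm c (e 0) * exp (-(2 * lam) * t) := by
  obtain ⟨μ, hμ, hμA⟩ := hA.exists_pos_mul_dotProduct_self_le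
  obtain ⟨δ, hδ, hδc⟩ := Finite.exists_pos_forall_le_of_pos hc
  refine ⟨μ * δ, mul_pos hμ hδ, fun t ht => ?_⟩
  have hdecay : ∀ s, -2 * (e s ⬝ᵥ A *ᵥ e s) ≤ -(2 * (μ * δ)) * weightedSqNorm c (e s) := by
    intro s
    have := mul_le_mul_of_nonneg_left (mul_weightedSqNorm_le_dotProduct_self hc hδc (e s)) hμ.le
    linarith [hμA (e s)]
  simpa using le_mul_exp_of_hasDerivAt_le_mul_self
    (hasDerivAt_weightedSqNorm_of_hasDerivAt_neg_diagonal_mul_mulVec hc he) hdecay ht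

theorem exists_abs_le_mul_exp_of_hasDerivAt_neg_diagonal_mul_mulVec (hA : A.PosDef)
    (hc : ∀ i, 0 < c i)
    (he : ∀ t i, HasDerivAt (fun s => e s i) (((-(diagonal c * A)) *ᵥ e t) i) t) :
    ∃ K lam : ℝ, 0 < K ∧ 0 < lam ∧ ∀ t, 0 ≤ t → ∀ i, |e t i| ≤ K * exp (-lam * t) := by
  obtain ⟨lam, hlam, hV⟩ := exists_weightedSqNorm_le_mul_exp hA hc he
  have hc₀ : ∀ i, 0 ≤ c i := fun i => (hc i).le
  have hci : ∀ i, c i ≤ ∑ j, c j := fun i =>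
    Finset.single_le_sum (fun j _ => hc₀ j) (Finset.mem_univ i)
  set C := (∑ j, c j) * weightedSqNorm c (e 0) + 1
  have hC : 0 < C := by
    have := weightedSqNorm_nonneg hc₀ (e 0)
    have := Finset.sum_nonneg fun j (_ : j ∈ Finset.univ) => hc₀ j
    positivity
  refine ⟨√C, lam, sqrt_pos.2 hC, hlam, fun t ht i => ?_⟩
  have hsq : e t i ^ 2 ≤ C * exp (-lam * t) ^ 2 := calc
    e t i ^ 2 ≤ c i * weightedSqNorm c (e t) := sq_le_mul_weightedSqNorm hc (e t) i
    _ ≤ (∑ j, c j) * (weightedSqNorm c (e 0) * exp (-(2 * lam) * t)) :=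
      mul_le_mul (hci i) (hV t ht) (weightedSqNorm_nonneg hc₀ _) ((hc₀ i).trans (hci i))
    _ ≤ C * exp (-lam * t) ^ 2 := by
      rw [← exp_nat_mul, ← mul_assoc]
      have hexp : (2 : ℕ) * (-lam * t) = -(2 * lam) * t := by push_cast; ring
      rw [hexp]
      exact mul_le_mul_of_nonneg_right (lt_add_one _).le (exp_pos _).le
  rw [← sqrt_sq (exp_pos (-lam * t)).le, ← sqrt_mul hC.le]
  exact abs_le_sqrt hsq

end Containment

theorem attack_free_containment_exponential_general
    (N : ℕ)
    (Φ₁ Φ₂ : Matrix (Fin N) (Fin N) ℝ)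
    (hΦ : (Φ₁ + Φ₂).PosDef)
    (cvec : Fin N → ℝ) (hcvec : ∀ i, 0 < cvec i)
    (ωn1 ωn2 : ℝ)
    (ω : ℝ → Fin N → ℝ)
    (e : ℝ → Fin N → ℝ)
    (he : ∀ t : ℝ, e t = fun i => ω t i -
      ((Φ₁ + Φ₂)⁻¹.mulVec
        (Φ₁.mulVec (fun _ => ωn1) + Φ₂.mulVec (fun _ => ωn2))) i)
    (hω : ∀ t : ℝ, ∀ i : Fin N,
      HasDerivAt (fun s => ω s i)
        ((-(Matrix.diagonal cvec * (Φ₁ + Φ₂))).mulVec (e t) i) t) :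
    ∃ K lam : ℝ, 0 < K ∧ 0 < lam ∧
      ∀ t : ℝ, 0 ≤ t → ∀ i : Fin N, |e t i| ≤ K * Real.exp (-lam * t) := by
  refine exists_abs_le_mul_exp_of_hasDerivAt_neg_diagonal_mul_mulVec hΦ hcvec fun t i => ?_
  have he_i : (fun s => e s i) = fun s => ω s i -
      ((Φ₁ + Φ₂)⁻¹ *ᵥ ((Φ₁ *ᵥ fun _ => ωn1) + Φ₂ *ᵥ fun _ => ωn2)) i :=
    funext fun s => congrFun (he s) i
  rw [he_i]
  exact (hω t i).sub_const _

/-- Lemma 1 (attack-free case): the containment error of the cooperative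
secondary control converges to zero exponentially, since `−C(Φ₁+Φ₂)` is
Hurwitz. -/
theorem attack_free_containment_exponential
    (N : ℕ) (hN : 0 < N)
    (Φ₁ Φ₂ : Matrix (Fin N) (Fin N) ℝ)
    (hΦ₁ : Φ₁.PosSemidef) (hΦ₂ : Φ₂.PosSemidef)
    (hΦ : (Φ₁ + Φ₂).PosDef)
    (cvec : Fin N → ℝ) (hcvec : ∀ i, 0 < cvec i)
    (ωn1 ωn2 : ℝ)
    (ω : ℝ → Fin N → ℝ)
    (e : ℝ → Fin N → ℝ)
    (he : ∀ t : ℝ, e t = fun i => ω t i -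
      ((Φ₁ + Φ₂)⁻¹.mulVec
        (Φ₁.mulVec (fun _ => ωn1) + Φ₂.mulVec (fun _ => ωn2))) i)
    (hω : ∀ t : ℝ, ∀ i : Fin N,
      HasDerivAt (fun s => ω s i)
        ((-(Matrix.diagonal cvec * (Φ₁ + Φ₂))).mulVec (e t) i) t) :
    ∃ K lam : ℝ, 0 < K ∧ 0 < lam ∧
      ∀ t : ℝ, 0 ≤ t → ∀ i : Fin N, |e t i| ≤ K * Real.exp (-lam * t) :=
  attack_free_containment_exponential_general N Φ₁ Φ₂ hΦ cvec hcvec ωn1 ωn2 ω e he hω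
end
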